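/- arXiv:1105.4585 — 4 statements merged into one kernel-verified Lean document; each statement's English description precedes it below -/
import Mathlib

section
/- Let X_1, ..., X_t be a martingale difference sequence adapted to a filtration (ℱ_τ) on a probability space, i.e. E[X_τ | ℱ_{τ−1}] = 0 a.s. for all τ, and assume X_τ ≤ C a.s. for all τ and that each X_τ is square-integrable. Let M_t = Σ_{τ=1}^t X_τ and V_t = Σ_{τ=1}^t E[X_τ² | ℱ_{τ−1}]. Then for any fixed λ ∈ [0, 1/C]: E[ exp( λ M_t − (e−2) λ² V_t ) ] ≤ 1. -/
/-!
For `x ≤ 1` one has `exp x ≤ 1 + x + (e - 2) x²`: for `x ≥ 0` compare the exponential series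
termwise with `x² ∑_{n ≥ 2} 1/n! = (e - 2) x²`, and for `x ≤ 0` already `exp x ≤ 1 + x + x²/2`.
Applied to `λ X_τ ≤ λ C ≤ 1` and conditioned on `ℱ (τ - 1)`, the martingale difference property
gives `E[exp (λ X_τ) | ℱ (τ - 1)] ≤ 1 + (e - 2) λ² E[X_τ² | ℱ (τ - 1)]`, which is at most
`exp ((e - 2) λ² E[X_τ² | ℱ (τ - 1)])`.
Hence `exp (λ M_t - (e - 2) λ² V_t)` is a nonnegative supermartingale started at `1`,
so its expectation is at most `1`.
-/

open MeasureTheory Real Finset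
open scoped Nat ENNReal

namespace Real

theorem exp_le_one_add_add_sq_div_two_of_nonpos {x : ℝ} (hx : x ≤ 0) :
    exp x ≤ 1 + x + x ^ 2 / 2 := by
  have hderiv : ∀ y : ℝ, HasDerivAt (fun y ↦ 1 + y + y ^ 2 / 2 - exp y) (1 + y - exp y) y := by
    intro y
    refine ((((hasDerivAt_id y).const_add 1).add ((hasDerivAt_pow 2 y).div_const 2)).sub
      (hasDerivAt_exp y)).congr_deriv ?_
    norm_num
  have hanti : Antitone fun y ↦ 1 + y + y ^ 2 / 2 - exp y :=
    antitone_of_deriv_nonpos (fun y ↦ (hderiv y).differentiableAt) fun y ↦ by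
      rw [(hderiv y).deriv]
      linarith [add_one_le_exp y]
  have := hanti hx
  simp only [exp_zero] at this
  linarith

theorem hasSum_pow_add_two_div_factorial (x : ℝ) :
    HasSum (fun n : ℕ ↦ x ^ (n + 2) / (n + 2)!) (exp x - (1 + x)) := by
  have h := (hasSum_nat_add_iff' 2).mpr (exp_eq_exp_ℝ ▸ NormedSpace.expSeries_div_hasSum_exp x)
  simpa [Finset.sum_range_succ] using h

theorem exp_le_one_add_add_mul_sq_of_le_one {x : ℝ} (hx : x ≤ 1) :
    exp x ≤ 1 + x + (exp 1 - 2) * x ^ 2 := by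
  rcases le_total x 0 with hneg | hpos
  · nlinarith [exp_le_one_add_add_sq_div_two_of_nonpos hneg, exp_one_gt_d9]
  · have hterm (n : ℕ) : x ^ (n + 2) / (n + 2)! ≤ x ^ 2 * (1 ^ (n + 2) / (n + 2)!) := by
      rw [one_pow, mul_one_div, pow_add x n 2]
      gcongr
      exact mul_le_of_le_one_left (by positivity) (pow_le_one₀ hpos hx)
    have := hasSum_le hterm (hasSum_pow_add_two_div_factorial x)
      ((hasSum_pow_add_two_div_factorial 1).mul_left _)
    linarith

theorem exp_one_sub_two_mul_sq_nonneg (x : ℝ) : 0 ≤ (exp 1 - 2) * x ^ 2 :=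
  mul_nonneg (by linarith [exp_one_gt_d9]) (sq_nonneg x)

end Real

section ConditionalStep

variable {Ω : Type*} {m m0 : MeasurableSpace Ω} {P : Measure Ω} {Y : Ω → ℝ} {C lam : ℝ}

theorem integrable_exp_mul_of_ae_le [IsFiniteMeasure P] (hY : AEStronglyMeasurable Y P)
    (hlam : 0 ≤ lam) (hYC : ∀ᵐ ω ∂P, Y ω ≤ C) : Integrable (fun ω ↦ exp (lam * Y ω)) P := by
  refine Integrable.of_bound (continuous_exp.comp_aestronglyMeasurable (hY.const_mul lam))
    (exp (lam * C)) ?_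
  filter_upwards [hYC] with ω hω
  rw [norm_of_nonneg (exp_pos _).le, exp_le_exp]
  exact mul_le_mul_of_nonneg_left hω hlam

theorem condExp_exp_mul_le [IsFiniteMeasure P] (hm : m ≤ m0) (hY : MemLp Y 2 P)
    (hmean : P[Y|m] =ᵐ[P] 0) (hYC : ∀ᵐ ω ∂P, Y ω ≤ C) (hlam : 0 ≤ lam) (hlamC : lam * C ≤ 1) :
    P[fun ω ↦ exp (lam * Y ω)|m] ≤ᵐ[P] fun ω ↦ 1 + (exp 1 - 2) * lam ^ 2 * P[Y ^ 2|m] ω := by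
  set c := (exp 1 - 2) * lam ^ 2
  have hYint : Integrable Y P := hY.integrable one_le_two
  have hY2int : Integrable (Y ^ 2) P := hY.integrable_sq
  have hquad : (fun ω ↦ exp (lam * Y ω)) ≤ᵐ[P] (fun _ ↦ (1 : ℝ)) + lam • Y + c • Y ^ 2 := by
    filter_upwards [hYC] with ω hω
    have := exp_le_one_add_add_mul_sq_of_le_one
      ((mul_le_mul_of_nonneg_left hω hlam).trans hlamC)
    simp only [Pi.add_apply, Pi.smul_apply, Pi.pow_apply, smul_eq_mul]
    linarith
  have hquad_int : Integrable ((fun _ ↦ (1 : ℝ)) + lam • Y + c • Y ^ 2) P :=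
    ((integrable_const 1).add (hYint.smul lam)).add (hY2int.smul c)
  have hcond_quad : P[(fun _ ↦ (1 : ℝ)) + lam • Y + c • Y ^ 2|m]
      =ᵐ[P] (fun _ ↦ (1 : ℝ)) + lam • P[Y|m] + c • P[Y ^ 2|m] := by
    filter_upwards [condExp_add ((integrable_const 1).add (hYint.smul lam))
        (hY2int.smul c) m, condExp_add (integrable_const 1) (hYint.smul lam) m,
      condExp_smul lam Y m, condExp_smul c (Y ^ 2) m] with ω h₁ h₂ h₃ h₄
    rw [h₁, Pi.add_apply, h₂, Pi.add_apply, h₃, h₄, condExp_const hm]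
    rfl
  filter_upwards [condExp_mono (m := m) (integrable_exp_mul_of_ae_le hY.1 hlam hYC) hquad_int
    hquad, hcond_quad, hmean] with ω hle heq hzero
  rw [heq] at hle
  simpa [hzero] using hle

theorem memLp_top_exp_mul_sub_condExp_sq (hm : m ≤ m0) (hY : AEStronglyMeasurable Y P)
    (hlam : 0 ≤ lam) (hYC : ∀ᵐ ω ∂P, Y ω ≤ C) :
    MemLp (fun ω ↦ exp (lam * Y ω - (exp 1 - 2) * lam ^ 2 * P[Y ^ 2|m] ω)) ∞ P := by
  refine memLp_top_of_bound (continuous_exp.comp_aestronglyMeasurable ((hY.const_mul lam).sub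
    ((stronglyMeasurable_condExp.mono hm).aestronglyMeasurable.const_mul _))) (exp (lam * C)) ?_
  have hsq : 0 ≤ᵐ[P] P[Y ^ 2|m] := condExp_nonneg (ae_of_all _ fun ω ↦ sq_nonneg (Y ω))
  filter_upwards [hYC, hsq] with ω hω hsqω
  have := mul_nonneg (exp_one_sub_two_mul_sq_nonneg lam) hsqω
  rw [norm_of_nonneg (exp_pos _).le, exp_le_exp]
  nlinarith

theorem condExp_exp_mul_sub_condExp_sq_le_one [IsFiniteMeasure P] (hm : m ≤ m0)
    (hY : MemLp Y 2 P) (hmean : P[Y|m] =ᵐ[P] 0) (hYC : ∀ᵐ ω ∂P, Y ω ≤ C) (hlam : 0 ≤ lam)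
    (hlamC : lam * C ≤ 1) :
    P[fun ω ↦ exp (lam * Y ω - (exp 1 - 2) * lam ^ 2 * P[Y ^ 2|m] ω)|m] ≤ᵐ[P] 1 := by
  set c := (exp 1 - 2) * lam ^ 2
  set g := P[Y ^ 2|m]
  have hg : 0 ≤ᵐ[P] g := condExp_nonneg (ae_of_all _ fun ω ↦ sq_nonneg (Y ω))
  have hsplit : (fun ω ↦ exp (lam * Y ω - c * g ω))
      = (fun ω ↦ exp (-(c * g ω))) * fun ω ↦ exp (lam * Y ω) := by
    ext ω
    rw [Pi.mul_apply, ← exp_add, neg_add_eq_sub]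
  have hdiscount_bound : ∀ᵐ ω ∂P, ‖exp (-(c * g ω))‖ ≤ 1 := by
    filter_upwards [hg] with ω hω
    rw [norm_of_nonneg (exp_pos _).le, exp_le_one_iff, neg_nonpos]
    exact mul_nonneg (exp_one_sub_two_mul_sq_nonneg lam) hω
  have hpull := condExp_stronglyMeasurable_mul_of_bound hm
    (continuous_exp.comp_stronglyMeasurable (stronglyMeasurable_condExp.const_mul c).neg)
    (integrable_exp_mul_of_ae_le hY.1 hlam hYC) 1 hdiscount_bound
  rw [hsplit]
  filter_upwards [hpull, condExp_exp_mul_le hm hY hmean hYC hlam hlamC] with ω hpullω hleω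
  calc (P[(fun ω ↦ exp (-(c * g ω))) * fun ω ↦ exp (lam * Y ω)|m]) ω
      = exp (-(c * g ω)) * P[fun ω ↦ exp (lam * Y ω)|m] ω := hpullω
    _ ≤ exp (-(c * g ω)) * exp (c * g ω) := by
      gcongr
      exact hleω.trans (by linarith [add_one_le_exp (c * g ω)])
    _ = 1 := by rw [← exp_add, neg_add_cancel, exp_zero]

end ConditionalStep

theorem integral_mul_le_integral_of_condExp_le_one {Ω : Type*} {m m0 : MeasurableSpace Ω}
    {P : Measure Ω} [IsFiniteMeasure P] (hm : m ≤ m0) {Z W : Ω → ℝ}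
    (hZ : StronglyMeasurable[m] Z) (hZ_nonneg : 0 ≤ᵐ[P] Z) (hZ_int : Integrable Z P)
    (hW : MemLp W ∞ P) (hW_le : P[W|m] ≤ᵐ[P] 1) :
    ∫ ω, (Z * W) ω ∂P ≤ ∫ ω, Z ω ∂P := by
  have hpull : P[Z * W|m] =ᵐ[P] Z * P[W|m] :=
    condExp_mul_of_stronglyMeasurable_left hZ (hZ_int.mul_of_top_left hW) (hW.integrable le_top)
  rw [← integral_condExp hm, integral_congr_ae hpull]
  refine integral_mono_ae (integrable_condExp.congr hpull) hZ_int ?_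
  filter_upwards [hZ_nonneg, hW_le] with ω hZω hWω
  exact mul_le_of_le_one_right hZω hWω

section BernsteinProcess

variable {Ω : Type*} {m0 : MeasurableSpace Ω} {P : Measure Ω} {ℱ : Filtration ℕ m0}
  {X : ℕ → Ω → ℝ} {C lam : ℝ} {t : ℕ}

variable (P ℱ X lam) in
noncomputable def bernsteinProcess (t : ℕ) (ω : Ω) : ℝ :=
  exp (lam * (∑ τ ∈ Icc 1 t, X τ ω) -
    (exp 1 - 2) * lam ^ 2 * ∑ τ ∈ Icc 1 t, P[X τ ^ 2|ℱ (τ - 1)] ω)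

@[simp]
theorem bernsteinProcess_zero : bernsteinProcess P ℱ X lam 0 = 1 := by
  ext ω
  simp [bernsteinProcess]

theorem bernsteinProcess_succ (t : ℕ) :
    bernsteinProcess P ℱ X lam (t + 1) = bernsteinProcess P ℱ X lam t *
      fun ω ↦ exp (lam * X (t + 1) ω - (exp 1 - 2) * lam ^ 2 * P[X (t + 1) ^ 2|ℱ t] ω) := by
  ext ω
  simp only [bernsteinProcess, Pi.mul_apply, ← exp_add,
    sum_Icc_succ_top (Nat.le_add_left 1 t), Nat.add_sub_cancel]
  ring_nf

theorem stronglyMeasurable_bernsteinProcess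
    (hadapted : ∀ τ ∈ Icc 1 t, StronglyMeasurable[ℱ τ] (X τ)) :
    StronglyMeasurable[ℱ t] (bernsteinProcess P ℱ X lam t) := by
  refine continuous_exp.comp_stronglyMeasurable (.sub (.const_mul ?_ _) (.const_mul ?_ _))
  · refine Finset.stronglyMeasurable_fun_sum _ fun τ hτ ↦ ?_
    exact (hadapted τ hτ).mono (ℱ.mono (mem_Icc.mp hτ).2)
  · refine Finset.stronglyMeasurable_fun_sum _ fun τ hτ ↦ ?_
    exact stronglyMeasurable_condExp.mono (ℱ.mono ((Nat.sub_le τ 1).trans (mem_Icc.mp hτ).2))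

theorem integrable_bernsteinProcess [IsFiniteMeasure P]
    (hadapted : ∀ τ ∈ Icc 1 t, StronglyMeasurable[ℱ τ] (X τ))
    (hbdd : ∀ τ ∈ Icc 1 t, ∀ᵐ ω ∂P, X τ ω ≤ C) (hlam : 0 ≤ lam) :
    Integrable (bernsteinProcess P ℱ X lam t) P := by
  suffices ∀ s ≤ t, Integrable (bernsteinProcess P ℱ X lam s) P from this t le_rfl
  intro s hs
  induction s with
  | zero => rw [bernsteinProcess_zero]; exact integrable_const (1 : ℝ)
  | succ s ih =>
    have hmem : s + 1 ∈ Icc 1 t := mem_Icc.mpr ⟨s.succ_pos, hs⟩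
    rw [bernsteinProcess_succ]
    exact (ih (by omega)).mul_of_top_left (memLp_top_exp_mul_sub_condExp_sq (ℱ.le s)
      ((hadapted _ hmem).mono (ℱ.le _)).aestronglyMeasurable hlam (hbdd _ hmem))

theorem integral_bernsteinProcess_le_one [IsProbabilityMeasure P]
    (hadapted : ∀ τ ∈ Icc 1 t, StronglyMeasurable[ℱ τ] (X τ))
    (hL2 : ∀ τ ∈ Icc 1 t, MemLp (X τ) 2 P)
    (hmdiff : ∀ τ ∈ Icc 1 t, P[X τ|ℱ (τ - 1)] =ᵐ[P] 0)
    (hbdd : ∀ τ ∈ Icc 1 t, ∀ᵐ ω ∂P, X τ ω ≤ C) (hlam : 0 ≤ lam) (hlamC : lam * C ≤ 1) :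
    ∫ ω, bernsteinProcess P ℱ X lam t ω ∂P ≤ 1 := by
  suffices ∀ s ≤ t, ∫ ω, bernsteinProcess P ℱ X lam s ω ∂P ≤ 1 from this t le_rfl
  intro s hs
  induction s with
  | zero => simp
  | succ s ih =>
    have hmem : s + 1 ∈ Icc 1 t := mem_Icc.mpr ⟨s.succ_pos, hs⟩
    have hsub : Icc 1 s ⊆ Icc 1 t := Icc_subset_Icc_right (by omega)
    rw [bernsteinProcess_succ]
    refine (integral_mul_le_integral_of_condExp_le_one (ℱ.le s)
      (stronglyMeasurable_bernsteinProcess fun τ hτ ↦ hadapted τ (hsub hτ))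
      (ae_of_all _ fun ω ↦ (exp_pos _).le)
      (integrable_bernsteinProcess (fun τ hτ ↦ hadapted τ (hsub hτ))
        (fun τ hτ ↦ hbdd τ (hsub hτ)) hlam)
      (memLp_top_exp_mul_sub_condExp_sq (ℱ.le s)
        ((hadapted _ hmem).mono (ℱ.le _)).aestronglyMeasurable hlam (hbdd _ hmem))
      (condExp_exp_mul_sub_condExp_sq_le_one (ℱ.le s) (hL2 _ hmem) (hmdiff _ hmem)
        (hbdd _ hmem) hlam hlamC)).trans (ih (by omega))

end BernsteinProcess

theorem bernstein_mgf_martingale_general {Ω : Type*} {m0 : MeasurableSpace Ω} {P : Measure Ω}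
    [IsProbabilityMeasure P] (ℱ : Filtration ℕ m0) (t : ℕ) (X : ℕ → Ω → ℝ) (C : ℝ)
    (hadapted : ∀ τ ∈ Finset.Icc 1 t, StronglyMeasurable[ℱ τ] (X τ))
    (hL2 : ∀ τ ∈ Finset.Icc 1 t, MemLp (X τ) 2 P)
    (hmdiff : ∀ τ ∈ Finset.Icc 1 t, P[X τ|ℱ (τ - 1)] =ᵐ[P] 0)
    (hbdd : ∀ τ ∈ Finset.Icc 1 t, ∀ᵐ ω ∂P, X τ ω ≤ C)
    (lam : ℝ) (hlam : lam ∈ Set.Icc 0 (1 / C)) :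
    ∫⁻ ω, ENNReal.ofReal
        (Real.exp (lam * (∑ τ ∈ Finset.Icc 1 t, X τ ω) -
          (Real.exp 1 - 2) * lam ^ 2 * ∑ τ ∈ Finset.Icc 1 t, (P[X τ ^ 2|ℱ (τ - 1)]) ω)) ∂P
      ≤ 1 := by
  obtain ⟨hlam, hlam_le⟩ := hlam
  have hlamC : lam * C ≤ 1 := by
    rcases le_or_gt C 0 with hC | hC
    · exact (mul_nonpos_of_nonneg_of_nonpos hlam hC).trans zero_le_one
    · exact (le_div_iff₀ hC).mp hlam_le
  change ∫⁻ ω, ENNReal.ofReal (bernsteinProcess P ℱ X lam t ω) ∂P ≤ 1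
  rw [← ofReal_integral_eq_lintegral_ofReal (integrable_bernsteinProcess hadapted hbdd hlam)
    (ae_of_all _ fun ω ↦ (exp_pos _).le)]
  exact ENNReal.ofReal_le_one.mpr
    (integral_bernsteinProcess_le_one hadapted hL2 hmdiff hbdd hlam hlamC)

/-- Bernstein-type inequality for martingales: if `X 1, ..., X t` is a martingale difference
sequence with `X τ ≤ C` a.s., then for any fixed `λ ∈ [0, 1/C]` the moment generating
function of the martingale, discounted by `(e-2) λ²` times the cumulative conditional
variance, is at most `1`. -/
theorem bernstein_mgf_martingale {Ω : Type*} {m0 : MeasurableSpace Ω} {P : Measure Ω}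
    [IsProbabilityMeasure P] (ℱ : Filtration ℕ m0) (t : ℕ) (X : ℕ → Ω → ℝ) (C : ℝ)
    (hC : 0 < C)
    (hadapted : ∀ τ ∈ Finset.Icc 1 t, StronglyMeasurable[ℱ τ] (X τ))
    (hL2 : ∀ τ ∈ Finset.Icc 1 t, MemLp (X τ) 2 P)
    (hmdiff : ∀ τ ∈ Finset.Icc 1 t, P[X τ|ℱ (τ - 1)] =ᵐ[P] 0)
    (hbdd : ∀ τ ∈ Finset.Icc 1 t, ∀ᵐ ω ∂P, X τ ω ≤ C)
    (lam : ℝ) (hlam : lam ∈ Set.Icc 0 (1 / C)) :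
    ∫⁻ ω, ENNReal.ofReal
        (Real.exp (lam * (∑ τ ∈ Finset.Icc 1 t, X τ ω) -
          (Real.exp 1 - 2) * lam ^ 2 * ∑ τ ∈ Finset.Icc 1 t, (P[X τ ^ 2|ℱ (τ - 1)]) ω)) ∂P
      ≤ 1 :=
  bernstein_mgf_martingale_general ℱ t X C hadapted hL2 hmdiff hbdd lam hlam
end

section
/- Let n ≥ 2 be an integer, let x_1 = 0 and let x_2, ..., x_n be arbitrary real numbers. Then for any α > 0: ( Σ_{i=1}^n x_i e^{−α x_i} ) / ( Σ_{j=1}^n e^{−α x_j} ) ≤ ln(n)/α. -/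
open Real Finset

/-- Jensen's inequality for `exp` under the Gibbs weights `p i = exp (-α * x i) / Z`, since
`p i * exp (α * x i) = 1 / Z`; equivalently, the entropy of the Gibbs distribution is at most
`log (card ι)`. -/
theorem mul_gibbs_average_le_log_card_sub_log_sum {ι : Type*} [Fintype ι] [Nonempty ι]
    (x : ι → ℝ) (α : ℝ) :
    α * ((∑ i, x i * exp (-α * x i)) / ∑ j, exp (-α * x j)) ≤
      log (Fintype.card ι) - log (∑ j, exp (-α * x j)) := by
  set Z := ∑ j, exp (-α * x j)
  have hZ : 0 < Z := Finset.sum_pos (fun j _ => exp_pos _) univ_nonempty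
  have jensen := convexOn_exp.map_sum_le (t := univ) (w := fun i => exp (-α * x i) / Z)
    (p := fun i => α * x i) (fun i _ => by positivity)
    (by rw [← Finset.sum_div, div_self hZ.ne']) (fun i _ => Set.mem_univ _)
  have hmean : ∑ i, (exp (-α * x i) / Z) • (α * x i) =
      α * ((∑ i, x i * exp (-α * x i)) / Z) := by
    simp only [smul_eq_mul, Finset.mul_sum, Finset.sum_div]
    exact Finset.sum_congr rfl fun i _ => by ring
  have hcard : ∑ i, (exp (-α * x i) / Z) • exp (α * x i) = Fintype.card ι / Z := by
    simp only [smul_eq_mul, div_mul_eq_mul_div, ← exp_add, neg_mul, neg_add_cancel, exp_zero,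
      Finset.sum_const, card_univ, nsmul_eq_mul, mul_one_div]
  rw [hmean, hcard] at jensen
  rw [← log_div (by positivity) hZ.ne']
  exact (le_log_iff_exp_le (by positivity)).mpr jensen

/-- The exponential-weights (Gibbs) average of values `x i` with `x 0 = 0` is at most
`ln n / α`. -/
theorem gibbs_average_le_log_div (n : ℕ) (hn : 2 ≤ n) (x : Fin n → ℝ) (hx1 : x ⟨0, by omega⟩ = 0)
    (α : ℝ) (hα : 0 < α) :
    (∑ i, x i * Real.exp (-α * x i)) / (∑ j, Real.exp (-α * x j)) ≤ Real.log n / α := by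
  have : Nonempty (Fin n) := ⟨⟨0, by omega⟩⟩
  have hZ : 1 ≤ ∑ j, exp (-α * x j) := by
    calc (1 : ℝ) = exp (-α * x ⟨0, by omega⟩) := by rw [hx1, mul_zero, exp_zero]
      _ ≤ ∑ j, exp (-α * x j) :=
        single_le_sum (f := fun j => exp (-α * x j)) (fun j _ => (exp_pos _).le) (mem_univ _)
  have hjensen := mul_gibbs_average_le_log_card_sub_log_sum x α
  rw [Fintype.card_fin] at hjensen
  rw [le_div_iff₀ hα, mul_comm]
  linarith [log_nonneg hZ]
end

section
/- For every integer n ≥ 2 and every real y > 0: ( (n−1) · y · ln(1/y) ) / ( 1 + (n−1) y ) ≤ ln n. Equivalently, (n−1) · y · ln(1/y) ≤ ln(n) · (1 + (n−1) y). -/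
open Real

/-- For every integer `n ≥ 2` and every real `y > 0`,
`((n-1) * y * ln (1/y)) / (1 + (n-1) * y) ≤ ln n`, or equivalently
`(n-1) * y * ln (1/y) ≤ ln n * (1 + (n-1) * y)`. -/
theorem weighted_log_ineq (n : ℕ) (hn : 2 ≤ n) (y : ℝ) (hy : 0 < y) :
    ((n - 1 : ℝ) * y * Real.log (1 / y)) / (1 + (n - 1 : ℝ) * y) ≤ Real.log n ∧
      (n - 1 : ℝ) * y * Real.log (1 / y) ≤ Real.log n * (1 + (n - 1 : ℝ) * y) := by
  have hn1 : (1 : ℝ) ≤ (n : ℝ) - 1 := by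
    have : (2 : ℝ) ≤ (n : ℝ) := by exact_mod_cast hn
    linarith
  have hnpos : (0 : ℝ) < (n : ℝ) := by linarith
  -- tangent bound: log (1/(n*y)) ≤ 1/(n*y) - 1
  have h1 : Real.log (1 / ((n : ℝ) * y)) ≤ 1 / ((n : ℝ) * y) - 1 :=
    Real.log_le_sub_one_of_pos (by positivity)
  have hsplit : Real.log (1 / ((n : ℝ) * y)) = Real.log (1 / y) - Real.log n := by
    rw [one_div, one_div, Real.log_inv, Real.log_inv, Real.log_mul (ne_of_gt hnpos) (ne_of_gt hy)]
    ring
  have h1' : Real.log (1 / y) ≤ Real.log n + 1 / ((n : ℝ) * y) - 1 := by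
    rw [hsplit] at h1; linarith
  -- (n-1)/n ≤ log n
  have h2 : Real.log (1 / (n : ℝ)) ≤ 1 / (n : ℝ) - 1 :=
    Real.log_le_sub_one_of_pos (by positivity)
  have h2' : 1 - 1 / (n : ℝ) ≤ Real.log n := by
    rw [one_div, Real.log_inv] at h2
    rw [one_div]; linarith
  have hlogn : (0 : ℝ) ≤ Real.log n := by
    have : (0:ℝ) < 1 - 1/(n:ℝ) := by
      rw [sub_pos, div_lt_one hnpos]; linarith
    linarith
  have hden : (0 : ℝ) < 1 + ((n : ℝ) - 1) * y := by nlinarith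
  have key : ((n : ℝ) - 1) * y * Real.log (1 / y) ≤ Real.log n * (1 + ((n : ℝ) - 1) * y) := by
    have hmul : ((n : ℝ) - 1) * y * Real.log (1 / y) ≤
        ((n : ℝ) - 1) * y * (Real.log n + 1 / ((n : ℝ) * y) - 1) := by
      apply mul_le_mul_of_nonneg_left h1' (by nlinarith)
    have hinv : ((n : ℝ) - 1) * y * (1 / ((n : ℝ) * y)) = ((n : ℝ) - 1) / n := by
      field_simp
    -- need: m y log n + m/n - m y ≤ log n + m y log n, i.e. m/n ≤ log n + m y
    have hmn : ((n : ℝ) - 1) / n = 1 - 1 / n := by field_simp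
    nlinarith [mul_pos (by linarith : (0:ℝ) < (n:ℝ) - 1) hy]
  exact ⟨(div_le_iff₀ hden).mpr key, key⟩
end

section
/- Let 𝒜 be a finite set of size K ≥ 2, let R, R̂ : 𝒜 → ℝ be two functions, let a* ∈ 𝒜 satisfy R(a*) = max_a R(a), and set Δ(a) = R(a*) − R(a) and Δ̂(a) = R̂(a*) − R̂(a). For γ > 0 define the distributions μ(a) = e^{γ R(a)} / Σ_{a'} e^{γ R(a')} and ρ(a) = e^{γ R̂(a)} / Σ_{a'} e^{γ R̂(a')}. Then KL(ρ‖μ) ≤ γ · ( [Δ(ρ) − Δ̂(ρ)] + [Δ̂(μ) − Δ(μ)] ), where Δ(ρ) = Σ_a ρ(a) Δ(a), Δ̂(ρ) = Σ_a ρ(a) Δ̂(a), Δ(μ) = Σ_a μ(a) Δ(a), Δ̂(μ) = Σ_a μ(a) Δ̂(a), and KL(ρ‖μ) = Σ_a ρ(a) ln(ρ(a)/μ(a)). -/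
open Real Finset

/-- The KL divergence between the Gibbs distribution `ρ` based on empirical rewards `R̂` and
the Gibbs distribution `μ` based on true rewards `R` is bounded by `γ` times the sum of the
gap discrepancies under `ρ` and under `μ`. -/
theorem kl_gibbs_le_gap_discrepancies {A : Type*} [Fintype A] (K : ℕ)
    (hK : Fintype.card A = K) (hK2 : 2 ≤ K)
    (R Rhat : A → ℝ) (astar : A) (hastar : ∀ a, R a ≤ R astar)
    (Δ Δhat : A → ℝ) (hΔ : ∀ a, Δ a = R astar - R a) (hΔhat : ∀ a, Δhat a = Rhat astar - Rhat a)
    (γ : ℝ) (hγ : 0 < γ) (μ ρ : A → ℝ)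
    (hμ : ∀ a, μ a = Real.exp (γ * R a) / ∑ a', Real.exp (γ * R a'))
    (hρ : ∀ a, ρ a = Real.exp (γ * Rhat a) / ∑ a', Real.exp (γ * Rhat a')) :
    ∑ a, ρ a * Real.log (ρ a / μ a) ≤
      γ * (((∑ a, ρ a * Δ a) - ∑ a, ρ a * Δhat a) +
            ((∑ a, μ a * Δhat a) - ∑ a, μ a * Δ a)) := by
  have hne : Nonempty A := by
    rw [← Fintype.card_pos_iff, hK]; omega
  set Z : ℝ := ∑ a', Real.exp (γ * R a') with hZdef
  set W : ℝ := ∑ a', Real.exp (γ * Rhat a') with hWdef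
  have hZ : 0 < Z := Finset.sum_pos (fun a _ => Real.exp_pos _) Finset.univ_nonempty
  have hW : 0 < W := Finset.sum_pos (fun a _ => Real.exp_pos _) Finset.univ_nonempty
  have hμpos : ∀ a, 0 < μ a := fun a => by
    rw [hμ a]; exact div_pos (Real.exp_pos _) hZ
  have hρpos : ∀ a, 0 < ρ a := fun a => by
    rw [hρ a]; exact div_pos (Real.exp_pos _) hW
  have hsumμ : ∑ a, μ a = 1 := by
    simp only [hμ]; rw [← Finset.sum_div, div_self hZ.ne']
  have hsumρ : ∑ a, ρ a = 1 := by
    simp only [hρ]; rw [← Finset.sum_div, div_self hW.ne']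
  have hlog : ∀ a, Real.log (ρ a / μ a) =
      (γ * Rhat a - Real.log W) - (γ * R a - Real.log Z) := by
    intro a
    rw [Real.log_div (hρpos a).ne' (hμpos a).ne', hρ a, hμ a,
      Real.log_div (Real.exp_pos _).ne' hW.ne',
      Real.log_div (Real.exp_pos _).ne' hZ.ne', Real.log_exp, Real.log_exp]
  have expand : ∀ p : A → ℝ, (∑ a, p a = 1) →
      ∑ a, p a * ((γ * Rhat a - Real.log W) - (γ * R a - Real.log Z)) =
        γ * (∑ a, p a * Rhat a) - γ * (∑ a, p a * R a) - Real.log W + Real.log Z := by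
    intro p hp
    have h : ∀ a, p a * ((γ * Rhat a - Real.log W) - (γ * R a - Real.log Z)) =
        γ * (p a * Rhat a) - γ * (p a * R a) + (Real.log Z - Real.log W) * p a := by
      intro a; ring
    simp_rw [h]
    rw [Finset.sum_add_distrib, Finset.sum_sub_distrib, ← Finset.mul_sum, ← Finset.mul_sum,
      ← Finset.mul_sum, hp]
    ring
  -- nonnegativity of reverse KL
  have hKLμ : 0 ≤ ∑ a, μ a * Real.log (μ a / ρ a) := by
    have h1 : ∑ a, μ a * Real.log (ρ a / μ a) ≤ ∑ a, (ρ a - μ a) := by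
      apply Finset.sum_le_sum
      intro a _
      have := Real.log_le_sub_one_of_pos (div_pos (hρpos a) (hμpos a))
      calc μ a * Real.log (ρ a / μ a) ≤ μ a * (ρ a / μ a - 1) := by
            exact mul_le_mul_of_nonneg_left this (hμpos a).le
        _ = ρ a - μ a := by rw [mul_sub, mul_one, mul_div_cancel₀ _ (hμpos a).ne']
    have h2 : ∑ a, (ρ a - μ a) = 0 := by
      rw [Finset.sum_sub_distrib, hsumρ, hsumμ]; ring
    have h3 : ∀ a, Real.log (μ a / ρ a) = -Real.log (ρ a / μ a) := by
      intro a
      rw [← Real.log_inv, inv_div]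
    simp_rw [h3, mul_neg]
    rw [Finset.sum_neg_distrib]
    linarith [h1.trans_eq h2]
  have hLρ : ∑ a, ρ a * Real.log (ρ a / μ a) =
      γ * (∑ a, ρ a * Rhat a) - γ * (∑ a, ρ a * R a) - Real.log W + Real.log Z := by
    rw [← expand ρ hsumρ]
    exact Finset.sum_congr rfl fun a _ => by rw [hlog a]
  have hLμ : ∑ a, μ a * Real.log (μ a / ρ a) =
      -(γ * (∑ a, μ a * Rhat a) - γ * (∑ a, μ a * R a) - Real.log W + Real.log Z) := by
    rw [← expand μ hsumμ]
    rw [← Finset.sum_neg_distrib]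
    refine Finset.sum_congr rfl fun a _ => ?_
    rw [show Real.log (μ a / ρ a) = -Real.log (ρ a / μ a) by rw [← Real.log_inv, inv_div],
      hlog a]
    ring
  have hΔρ : ∑ a, ρ a * Δ a = R astar - ∑ a, ρ a * R a := by
    simp_rw [hΔ, mul_sub]
    rw [Finset.sum_sub_distrib, ← Finset.sum_mul, hsumρ, one_mul]
  have hΔμ : ∑ a, μ a * Δ a = R astar - ∑ a, μ a * R a := by
    simp_rw [hΔ, mul_sub]
    rw [Finset.sum_sub_distrib, ← Finset.sum_mul, hsumμ, one_mul]
  have hΔhatρ : ∑ a, ρ a * Δhat a = Rhat astar - ∑ a, ρ a * Rhat a := by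
    simp_rw [hΔhat, mul_sub]
    rw [Finset.sum_sub_distrib, ← Finset.sum_mul, hsumρ, one_mul]
  have hΔhatμ : ∑ a, μ a * Δhat a = Rhat astar - ∑ a, μ a * Rhat a := by
    simp_rw [hΔhat, mul_sub]
    rw [Finset.sum_sub_distrib, ← Finset.sum_mul, hsumμ, one_mul]
  rw [hΔρ, hΔμ, hΔhatρ, hΔhatμ, hLρ]
  rw [hLμ] at hKLμ
  linarith
end
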